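/- arXiv:1709.07578 — 6 statements merged into one kernel-verified Lean document; each statement's English description precedes it below -/
import Mathlib

section
/- Let K be an irreducible, aperiodic, substochastic kernel on a countable state space S with convergence parameter R = 1/ρ (i.e., ρ = lim (K^n(x,y))^{1/n} for all x,y). If for some x ∈ S there is a probability measure π_x on S with K^n(x,y)/K^n(x,S) → π_x(y) for all y ∈ S, then K^{n+1}(x,S)/K^n(x,S) → ρ. -/
/-!
Write `s n = K^n(x,S)` and `μ n = K^n(x,·) / s n`. Since `μ n y₀ → π y₀ > 0` and
`K^n(x,y₀)^(1/n) → ρ`, also `s n ^ (1/n) → ρ`; hence the ratios `s (n+1) / s n` are infinitely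
often below any `b > ρ`, and passing to the limit in `μ n v K(v,u) ≤ μ (n+1) u · s (n+1) / s n`
along those `n` gives `π K ≤ ρ π`. By irreducibility `π > 0`, so every row of `K` is summable and
`s (n+1) / s n = ∑ w, μ n w K(w,S)`. Scheffé's lemma upgrades the pointwise convergence `μ n → π`
to convergence in `ℓ¹`, so the ratios converge to `∑ w, π w K(w,S)`; a convergent ratio sequence
has the same limit as the `n`-th roots, which is `ρ`.
-/

open Filter Topology

open scoped Classical in
/-- Matrix powers of a kernel `K` on a countable state space. -/
noncomputable def Kpow {S : Type*} (K : S → S → ℝ) : ℕ → S → S → ℝ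
  | 0 => fun x y => if x = y then 1 else 0
  | n + 1 => fun x y => ∑' z, Kpow K n x z * K z y

section RootRatio

variable {s : ℕ → ℝ}

lemma tendsto_rpow_inv_natCast_of_tendsto {t : ℕ → ℝ} {p : ℝ} (ht : Tendsto t atTop (𝓝 p))
    (hp : 0 < p) : Tendsto (fun n : ℕ => t n ^ (n : ℝ)⁻¹) atTop (𝓝 1) := by
  have hlog : Tendsto (fun n : ℕ => Real.log (t n) * (n : ℝ)⁻¹) atTop (𝓝 0) := by
    simpa using ((Real.continuousAt_log hp.ne').tendsto.comp ht).mul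
      tendsto_inv_atTop_nhds_zero_nat
  have hexp := (Real.continuous_exp.tendsto 0).comp hlog
  rw [Real.exp_zero] at hexp
  refine hexp.congr' ?_
  filter_upwards [ht.eventually (eventually_gt_nhds hp)] with n hn
  simp only [Function.comp_apply, Real.rpow_def_of_pos hn]

lemma tendsto_mul_pow_rpow_inv {C b : ℝ} (hC : 0 < C) (hb : 0 ≤ b) :
    Tendsto (fun n : ℕ => (C * b ^ n) ^ (n : ℝ)⁻¹) atTop (𝓝 b) := by
  have hlim := (tendsto_rpow_inv_natCast_of_tendsto tendsto_const_nhds hC).mul_const b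
  rw [one_mul] at hlim
  refine hlim.congr' ?_
  filter_upwards [eventually_ne_atTop 0] with n hn
  rw [Real.mul_rpow hC.le (pow_nonneg hb n), ← Real.rpow_natCast, ← Real.rpow_mul hb,
    mul_inv_cancel₀ (Nat.cast_ne_zero.mpr hn), Real.rpow_one]

lemma eventually_pos_of_tendsto_root {ρ : ℝ} (hs : ∀ n, 0 ≤ s n) (hρ : 0 < ρ)
    (hroot : Tendsto (fun n : ℕ => s n ^ (n : ℝ)⁻¹) atTop (𝓝 ρ)) : ∀ᶠ n in atTop, 0 < s n := by
  filter_upwards [hroot.eventually (eventually_gt_nhds hρ), eventually_ne_atTop 0] with n hn hn0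
  refine (hs n).lt_of_ne fun h => ?_
  rw [← h, Real.zero_rpow (inv_ne_zero (Nat.cast_ne_zero.mpr hn0))] at hn
  exact hn.false

lemma eventually_pos_of_tendsto_div {a : ℕ → ℝ} {p : ℝ} (hs : ∀ n, 0 ≤ s n) (hp : 0 < p)
    (hdiv : Tendsto (fun n => a n / s n) atTop (𝓝 p)) : ∀ᶠ n in atTop, 0 < s n := by
  filter_upwards [hdiv.eventually (eventually_gt_nhds hp)] with n hn
  refine (hs n).lt_of_ne fun h => ?_
  rw [← h, div_zero] at hn
  exact hn.false

lemma tendsto_root_of_tendsto_div {a : ℕ → ℝ} {p ρ : ℝ} (hs : ∀ n, 0 ≤ s n) (hp : 0 < p)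
    (hdiv : Tendsto (fun n => a n / s n) atTop (𝓝 p))
    (ha : Tendsto (fun n : ℕ => a n ^ (n : ℝ)⁻¹) atTop (𝓝 ρ)) :
    Tendsto (fun n : ℕ => s n ^ (n : ℝ)⁻¹) atTop (𝓝 ρ) := by
  have hlim := ha.div (tendsto_rpow_inv_natCast_of_tendsto hdiv hp) one_ne_zero
  rw [div_one] at hlim
  refine hlim.congr' ?_
  filter_upwards [eventually_pos_of_tendsto_div hs hp hdiv,
    hdiv.eventually (eventually_gt_nhds hp)] with n hsn hn
  have han : 0 < a n := (div_pos_iff_of_pos_right hsn).mp hn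
  rw [Pi.div_apply, Real.div_rpow han.le hsn.le, div_div_cancel₀ (Real.rpow_pos_of_pos han _).ne']

lemma ge_of_tendsto_root_of_mul_le_succ {b ρ : ℝ} (hb : 0 < b)
    (h : ∀ᶠ n in atTop, 0 < s n ∧ b * s n ≤ s (n + 1))
    (hroot : Tendsto (fun n : ℕ => s n ^ (n : ℝ)⁻¹) atTop (𝓝 ρ)) : b ≤ ρ := by
  obtain ⟨N, hN⟩ := eventually_atTop.mp h
  have hgeom : ∀ n, N ≤ n → s N / b ^ N * b ^ n ≤ s n := by
    intro n hn
    obtain ⟨k, rfl⟩ := Nat.exists_eq_add_of_le hn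
    calc s N / b ^ N * b ^ (N + k) = b ^ k * s N := by
          rw [pow_add]; field_simp
      _ ≤ s (N + k) := geom_le (u := fun k => s (N + k)) hb.le k
          fun i _ => (hN (N + i) (Nat.le_add_right N i)).2
  have hC : 0 < s N / b ^ N := div_pos (hN N le_rfl).1 (pow_pos hb N)
  refine le_of_tendsto_of_tendsto (tendsto_mul_pow_rpow_inv hC hb.le) hroot ?_
  filter_upwards [eventually_ge_atTop N] with n hn
  exact Real.rpow_le_rpow (by positivity) (hgeom n hn) (by positivity)

lemma le_of_tendsto_root_of_succ_le_mul {b ρ : ℝ} (hb : 0 < b)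
    (h : ∀ᶠ n in atTop, 0 < s n ∧ s (n + 1) ≤ b * s n)
    (hroot : Tendsto (fun n : ℕ => s n ^ (n : ℝ)⁻¹) atTop (𝓝 ρ)) : ρ ≤ b := by
  obtain ⟨N, hN⟩ := eventually_atTop.mp h
  have hgeom : ∀ n, N ≤ n → s n ≤ s N / b ^ N * b ^ n := by
    intro n hn
    obtain ⟨k, rfl⟩ := Nat.exists_eq_add_of_le hn
    calc s (N + k) ≤ b ^ k * s N := le_geom (u := fun k => s (N + k)) hb.le k
          fun i _ => (hN (N + i) (Nat.le_add_right N i)).2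
      _ = s N / b ^ N * b ^ (N + k) := by
          rw [pow_add]; field_simp
  have hC : 0 < s N / b ^ N := div_pos (hN N le_rfl).1 (pow_pos hb N)
  refine le_of_tendsto_of_tendsto hroot (tendsto_mul_pow_rpow_inv hC hb.le) ?_
  filter_upwards [eventually_ge_atTop N] with n hn
  exact Real.rpow_le_rpow (hN n hn).1.le (hgeom n hn) (by positivity)

lemma frequently_succ_lt_mul_of_tendsto_root {b ρ : ℝ} (hρb : ρ < b)
    (hs : ∀ᶠ n in atTop, 0 < s n)
    (hroot : Tendsto (fun n : ℕ => s n ^ (n : ℝ)⁻¹) atTop (𝓝 ρ)) :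
    ∃ᶠ n in atTop, s (n + 1) < b * s n := by
  have hρ : 0 ≤ ρ := ge_of_tendsto hroot (hs.mono fun n hn => Real.rpow_nonneg hn.le _)
  by_contra h
  rw [not_frequently] at h
  refine hρb.not_ge (ge_of_tendsto_root_of_mul_le_succ (hρ.trans_lt hρb) ?_ hroot)
  filter_upwards [hs, h] with n hn hn'
  exact ⟨hn, not_lt.mp hn'⟩

lemma eq_of_tendsto_succ_div_of_tendsto_root {L ρ : ℝ} (hs : ∀ᶠ n in atTop, 0 < s n)
    (hratio : Tendsto (fun n => s (n + 1) / s n) atTop (𝓝 L))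
    (hroot : Tendsto (fun n : ℕ => s n ^ (n : ℝ)⁻¹) atTop (𝓝 ρ)) : L = ρ := by
  have hρ : 0 ≤ ρ := ge_of_tendsto hroot (hs.mono fun n hn => Real.rpow_nonneg hn.le _)
  have hL : 0 ≤ L := ge_of_tendsto hratio <| by
    filter_upwards [hs, (tendsto_add_atTop_nat 1).eventually hs] with n hn hn1
    exact div_nonneg hn1.le hn.le
  apply le_antisymm
  · refine le_of_forall_lt_imp_le_of_dense fun b hb => ?_
    rcases le_or_gt b 0 with hb0 | hb0
    · exact hb0.trans hρ
    · refine ge_of_tendsto_root_of_mul_le_succ hb0 ?_ hroot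
      filter_upwards [hs, hratio.eventually (eventually_gt_nhds hb)] with n hn hr
      exact ⟨hn, ((lt_div_iff₀ hn).mp hr).le⟩
  · refine le_of_forall_gt_imp_ge_of_dense fun b hb => ?_
    refine le_of_tendsto_root_of_succ_le_mul (hL.trans_lt hb) ?_ hroot
    filter_upwards [hs, hratio.eventually (eventually_lt_nhds hb)] with n hn hr
    exact ⟨hn, ((div_lt_iff₀ hn).mp hr).le⟩

end RootRatio

section Scheffe

variable {α β : Type*} {l : Filter α} {μ : α → β → ℝ} {π : β → ℝ}

theorem tendsto_tsum_abs_sub_of_tendsto (hμ : ∀ᶠ a in l, (∀ w, 0 ≤ μ a w) ∧ HasSum (μ a) 1)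
    (hπ : HasSum π 1) (hπnn : ∀ w, 0 ≤ π w) (h : ∀ w, Tendsto (μ · w) l (𝓝 (π w))) :
    Tendsto (fun a => ∑' w, |μ a w - π w|) l (𝓝 0) := by
  have hle : ∀ a, (∀ w, 0 ≤ μ a w) → ∀ w, max (π w - μ a w) 0 ≤ π w := fun a ha w =>
    max_le (by linarith [ha w]) (hπnn w)
  have hdef : Tendsto (fun a => ∑' w, max (π w - μ a w) 0) l (𝓝 0) := by
    have hlim := tendsto_tsum_of_dominated_convergence hπ.summable
      (fun w => (tendsto_const_nhds.sub (h w)).max tendsto_const_nhds)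
      (hμ.mono fun a ha w => by
        rw [Real.norm_of_nonneg (le_max_right _ _)]; exact hle a ha.1 w)
    rwa [show ∑' w, max (π w - π w) 0 = 0 by simp] at hlim
  -- Both vectors have mass one, so `μ - π` sums to zero and `|μ - π|` to twice its negative part.
  have htwice := hdef.const_mul 2
  rw [mul_zero] at htwice
  refine htwice.congr' (hμ.mono fun a ha => ?_)
  have hsum : HasSum (fun w => μ a w - π w) 0 := by simpa using ha.2.sub hπ
  have hneg : Summable fun w => max (π w - μ a w) 0 :=
    hπ.summable.of_nonneg_of_le (fun w => le_max_right _ _) (hle a ha.1)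
  have habs : ∀ w, |μ a w - π w| = (μ a w - π w) + 2 * max (π w - μ a w) 0 := fun w => by
    rcases le_total (μ a w) (π w) with h | h
    · rw [abs_of_nonpos (by linarith), max_eq_left (by linarith)]; ring
    · rw [abs_of_nonneg (by linarith), max_eq_right (by linarith)]; ring
  change _ = ∑' w, |μ a w - π w|
  rw [tsum_congr habs, (hsum.add (hneg.hasSum.mul_left 2)).tsum_eq, zero_add]

theorem tendsto_tsum_mul_of_tendsto (hμ : ∀ᶠ a in l, (∀ w, 0 ≤ μ a w) ∧ HasSum (μ a) 1)
    (hπ : HasSum π 1) (hπnn : ∀ w, 0 ≤ π w) (h : ∀ w, Tendsto (μ · w) l (𝓝 (π w)))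
    {f : β → ℝ} {C : ℝ} (hf : ∀ w, |f w| ≤ C) :
    Tendsto (fun a => ∑' w, μ a w * f w) l (𝓝 (∑' w, π w * f w)) := by
  have hC := (tendsto_tsum_abs_sub_of_tendsto hμ hπ hπnn h).const_mul C
  rw [mul_zero] at hC
  rw [tendsto_iff_norm_sub_tendsto_zero]
  refine squeeze_zero' (Eventually.of_forall fun a => norm_nonneg _) (hμ.mono fun a ha => ?_) hC
  have hweighted : ∀ {ν : β → ℝ}, (∀ w, 0 ≤ ν w) → Summable ν → Summable fun w => ν w * f w :=
    fun hν hνs => (hνs.mul_left C).of_norm_bounded fun w => by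
      rw [Real.norm_eq_abs, abs_mul, abs_of_nonneg (hν w), mul_comm]
      exact mul_le_mul_of_nonneg_right (hf w) (hν w)
  have hdiff : Summable fun w => |μ a w - π w| :=
    (ha.2.summable.add hπ.summable).of_nonneg_of_le (fun w => abs_nonneg _) fun w =>
      (abs_sub _ _).trans (by rw [abs_of_nonneg (ha.1 w), abs_of_nonneg (hπnn w)])
  have hterm : ∀ w, ‖μ a w * f w - π w * f w‖ ≤ C * |μ a w - π w| := fun w => by
    rw [← sub_mul, Real.norm_eq_abs, abs_mul, mul_comm]
    exact mul_le_mul_of_nonneg_right (hf w) (abs_nonneg _)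
  rw [← Summable.tsum_sub (hweighted ha.1 ha.2.summable) (hweighted hπnn hπ.summable),
    ← tsum_mul_left]
  have hnorm : Summable fun w => ‖μ a w * f w - π w * f w‖ :=
    (hdiff.mul_left C).of_nonneg_of_le (fun _ => norm_nonneg _) hterm
  exact (norm_tsum_le_tsum_norm hnorm).trans (hnorm.tsum_le_tsum hterm (hdiff.mul_left C))

end Scheffe

lemma summable_of_tsum_ne_zero {β : Type*} {f : β → ℝ} (h : ∑' b, f b ≠ 0) : Summable f :=
  by_contra fun hf => h (tsum_eq_zero_of_not_summable hf)

section Kernel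

variable {S : Type*} {K : S → S → ℝ}

lemma Kpow_nonneg (hnn : ∀ x y, 0 ≤ K x y) (n : ℕ) (v y : S) : 0 ≤ Kpow K n v y := by
  induction n generalizing y with
  | zero => simp only [Kpow]; split_ifs <;> norm_num
  | succ n ih => exact tsum_nonneg fun z => mul_nonneg (ih z) (hnn z y)

lemma Kpow_mul_le_Kpow_succ (hnn : ∀ x y, 0 ≤ K x y) {n : ℕ} {v u : S}
    (h : 0 < Kpow K (n + 1) v u) (w : S) : Kpow K n v w * K w u ≤ Kpow K (n + 1) v u :=
  (summable_of_tsum_ne_zero h.ne').le_tsum w fun z _ =>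
    mul_nonneg (Kpow_nonneg hnn n v z) (hnn z u)

lemma pos_of_Kpow_pos (hnn : ∀ x y, 0 ≤ K x y) {f : S → ℝ}
    (hf : ∀ v u, 0 < f v → 0 < K v u → 0 < f u) {v : S} (hv : 0 < f v) :
    ∀ {n : ℕ} {u : S}, 0 < Kpow K n v u → 0 < f u
  | 0, u, h => by
    simp only [Kpow] at h
    split_ifs at h with hvu
    · exact hvu ▸ hv
    · exact (lt_irrefl 0 h).elim
  | n + 1, u, h => by
    obtain ⟨w, hw⟩ : ∃ w, Kpow K n v w * K w u ≠ 0 := by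
      by_contra! h0
      simp only [Kpow, h0, tsum_zero, lt_irrefl] at h
    exact hf w u (pos_of_Kpow_pos hnn hf hv
      ((Kpow_nonneg hnn n v w).lt_of_ne' (left_ne_zero_of_mul hw)))
      ((hnn w u).lt_of_ne' (right_ne_zero_of_mul hw))

lemma pos_of_irreducible_of_mul_le (hnn : ∀ x y, 0 ≤ K x y)
    (hirr : ∀ x y : S, ∃ n, 0 < Kpow K n x y) {ρ : ℝ} (hρ : 0 ≤ ρ) {f : S → ℝ}
    (hf : ∀ v u, f v * K v u ≤ ρ * f u) {v : S} (hv : 0 < f v) (u : S) : 0 < f u := by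
  obtain ⟨n, hn⟩ := hirr v u
  exact pos_of_Kpow_pos hnn (fun v u hv hK =>
    pos_of_mul_pos_right ((mul_pos hv hK).trans_le (hf v u)) hρ) hv hn

lemma summable_row_of_mul_le (hnn : ∀ x y, 0 ≤ K x y) {ρ : ℝ} {f : S → ℝ} (hsum : Summable f)
    {w : S} (hw : 0 < f w) (hf : ∀ u, f w * K w u ≤ ρ * f u) : Summable (K w) :=
  (hsum.mul_left (ρ / f w)).of_nonneg_of_le (hnn w) fun u => by
    rw [div_mul_eq_mul_div, le_div_iff₀ hw, mul_comm]
    exact hf u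

lemma tsum_Kpow_succ (hnn : ∀ x y, 0 ≤ K x y) (hsub : ∀ x, ∑' y, K x y ≤ 1)
    (hrow : ∀ w, Summable (K w)) {n : ℕ} {v : S} (hv : Summable (Kpow K n v)) :
    ∑' z, Kpow K (n + 1) v z = ∑' w, Kpow K n v w * ∑' y, K w y := by
  have hrows : ∀ w, Summable fun y => Kpow K n v w * K w y := fun w => (hrow w).mul_left _
  have htot : Summable fun w => Kpow K n v w * ∑' y, K w y :=
    hv.of_nonneg_of_le (fun w => mul_nonneg (Kpow_nonneg hnn n v w) (tsum_nonneg (hnn w)))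
      fun w => mul_le_of_le_one_right (Kpow_nonneg hnn n v w) (hsub w)
  have hprod : Summable (Function.uncurry fun w y => Kpow K n v w * K w y) :=
    (summable_prod_of_nonneg fun p => mul_nonneg (Kpow_nonneg hnn n v p.1) (hnn p.1 p.2)).mpr
      ⟨hrows, by simpa only [Function.uncurry, tsum_mul_left] using htot⟩
  change ∑' y, ∑' w, Kpow K n v w * K w y = _
  rw [hprod.tsum_comm' hrows fun y => hprod.prod_symm.prod_factor y]
  exact tsum_congr fun w => tsum_mul_left

end Kernel

section Yaglom

variable {S : Type*} {K : S → S → ℝ} {x : S} {π : S → ℝ} {ρ : ℝ}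

lemma yaglom_limit_mul_le (hnn : ∀ x y, 0 ≤ K x y) (hρpos : 0 < ρ)
    (hρ : ∀ y, Tendsto (fun n : ℕ => (Kpow K n x y) ^ ((n : ℝ)⁻¹)) atTop (𝓝 ρ))
    (hyag : ∀ y, Tendsto (fun n : ℕ => Kpow K n x y / ∑' z, Kpow K n x z) atTop (𝓝 (π y)))
    (hs : ∀ᶠ n in atTop, 0 < ∑' z, Kpow K n x z)
    (hroot : Tendsto (fun n : ℕ => (∑' z, Kpow K n x z) ^ (n : ℝ)⁻¹) atTop (𝓝 ρ)) (v u : S) :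
    π v * K v u ≤ ρ * π u := by
  have hshift := tendsto_add_atTop_nat 1
  have hb : ∀ b, ρ < b → π v * K v u ≤ b * π u := by
    intro b hb
    have hpos : ∀ᶠ n in atTop, 0 < Kpow K (n + 1) x u := hshift.eventually
      (eventually_pos_of_tendsto_root (Kpow_nonneg hnn · x u) hρpos (hρ u))
    refine le_of_tendsto_of_tendsto_of_frequently ((hyag v).mul_const (K v u))
      (((hyag u).comp hshift).const_mul b) ?_
    refine ((frequently_succ_lt_mul_of_tendsto_root hb hs hroot).and_eventually
      (hpos.and (hs.and (hshift.eventually hs)))).mono ?_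
    rintro n ⟨hratio, hu, hsn, hsn1⟩
    calc Kpow K n x v / (∑' z, Kpow K n x z) * K v u
        = Kpow K n x v * K v u / ∑' z, Kpow K n x z := div_mul_eq_mul_div _ _ _
      _ ≤ Kpow K (n + 1) x u / ∑' z, Kpow K n x z :=
          div_le_div_of_nonneg_right (Kpow_mul_le_Kpow_succ hnn hu v) hsn.le
      _ ≤ b * (Kpow K (n + 1) x u / ∑' z, Kpow K (n + 1) x z) := by
          rw [mul_div_assoc', div_le_div_iff₀ hsn hsn1, mul_comm b, mul_assoc]
          exact mul_le_mul_of_nonneg_left hratio.le hu.le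
  have hlim : Tendsto (fun b => b * π u) (𝓝[>] ρ) (𝓝 (ρ * π u)) :=
    ((continuous_mul_const (π u)).tendsto ρ).mono_left nhdsWithin_le_nhds
  exact ge_of_tendsto hlim (eventually_nhdsWithin_of_forall hb)

lemma tendsto_survival_ratio_of_yaglom (hnn : ∀ x y, 0 ≤ K x y)
    (hsub : ∀ x, ∑' y, K x y ≤ 1) (hrow : ∀ w, Summable (K w)) (hπ : HasSum π 1)
    (hπnn : ∀ y, 0 ≤ π y)
    (hyag : ∀ y, Tendsto (fun n : ℕ => Kpow K n x y / ∑' z, Kpow K n x z) atTop (𝓝 (π y)))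
    (hs : ∀ᶠ n in atTop, 0 < ∑' z, Kpow K n x z) :
    Tendsto (fun n : ℕ => (∑' z, Kpow K (n + 1) x z) / (∑' z, Kpow K n x z))
      atTop (𝓝 (∑' w, π w * ∑' y, K w y)) := by
  have hprob : ∀ᶠ n in atTop, (∀ w, 0 ≤ Kpow K n x w / ∑' z, Kpow K n x z) ∧
      HasSum (fun w => Kpow K n x w / ∑' z, Kpow K n x z) 1 := by
    filter_upwards [hs] with n hn
    refine ⟨fun w => div_nonneg (Kpow_nonneg hnn n x w) hn.le, ?_⟩
    simpa only [div_self hn.ne'] using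
      (summable_of_tsum_ne_zero hn.ne').hasSum.div_const (∑' z, Kpow K n x z)
  refine (tendsto_tsum_mul_of_tendsto hprob hπ hπnn hyag (C := 1) fun w => ?_).congr' ?_
  · rw [abs_of_nonneg (tsum_nonneg (hnn w))]
    exact hsub w
  · filter_upwards [hs] with n hn
    rw [tsum_Kpow_succ hnn hsub hrow (summable_of_tsum_ne_zero hn.ne'), ← tsum_div_const]
    exact tsum_congr fun w => div_mul_eq_mul_div _ _ _

end Yaglom

theorem yaglom_survival_ratio_general {S : Type*} (K : S → S → ℝ)
    (hnn : ∀ x y, 0 ≤ K x y)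
    (hsub : ∀ x, ∑' y, K x y ≤ 1)
    (hirr : ∀ x y : S, ∃ n, 0 < Kpow K n x y)
    (ρ : ℝ) (hρpos : 0 < ρ)
    (hρ : ∀ x y : S,
      Tendsto (fun n : ℕ => (Kpow K n x y) ^ ((n : ℝ)⁻¹)) atTop (𝓝 ρ))
    (x : S) (π : S → ℝ) (hπnn : ∀ y, 0 ≤ π y) (hπ1 : ∑' y, π y = 1)
    (hyag : ∀ y : S,
      Tendsto (fun n : ℕ => Kpow K n x y / ∑' z, Kpow K n x z) atTop (𝓝 (π y))) :
    Tendsto (fun n : ℕ => (∑' z, Kpow K (n + 1) x z) / (∑' z, Kpow K n x z))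
      atTop (𝓝 ρ) := by
  have hπ : HasSum π 1 := hπ1 ▸ (summable_of_tsum_ne_zero (hπ1 ▸ one_ne_zero)).hasSum
  obtain ⟨y₀, hy₀⟩ : ∃ y, 0 < π y := by
    by_contra! h
    simp [show π = 0 from funext fun y => le_antisymm (h y) (hπnn y)] at hπ1
  have hmass : ∀ n, 0 ≤ ∑' z, Kpow K n x z := fun n => tsum_nonneg (Kpow_nonneg hnn n x)
  have hs := eventually_pos_of_tendsto_div hmass hy₀ (hyag y₀)
  have hroot := tendsto_root_of_tendsto_div hmass hy₀ (hyag y₀) (hρ x y₀)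
  have hinv := yaglom_limit_mul_le hnn hρpos (hρ x) hyag hs hroot
  have hπpos := pos_of_irreducible_of_mul_le hnn hirr hρpos.le hinv hy₀
  have hrow : ∀ w, Summable (K w) := fun w =>
    summable_row_of_mul_le hnn hπ.summable (hπpos w) (hinv w)
  have hratio := tendsto_survival_ratio_of_yaglom hnn hsub hrow hπ hπnn hyag hs
  rwa [eq_of_tendsto_succ_div_of_tendsto_root hs hratio hroot] at hratio

/-- If an irreducible, aperiodic, substochastic kernel with convergence norm `ρ`
has a Yaglom limit `π` starting from `x`, then the one-step survival probabilities
`K^{n+1}(x,S)/K^n(x,S)` converge to `ρ`. -/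
theorem yaglom_survival_ratio {S : Type*} [Countable S] (K : S → S → ℝ)
    (hnn : ∀ x y, 0 ≤ K x y)
    (hsub : ∀ x, ∑' y, K x y ≤ 1)
    (hirr : ∀ x y : S, ∃ n, 0 < Kpow K n x y)
    (haper : ∀ x : S, ∀ m : ℕ, (∀ n, 0 < n → 0 < Kpow K n x x → m ∣ n) → m = 1)
    (ρ : ℝ) (hρpos : 0 < ρ) (hρle : ρ ≤ 1)
    (hρ : ∀ x y : S,
      Tendsto (fun n : ℕ => (Kpow K n x y) ^ ((n : ℝ)⁻¹)) atTop (𝓝 ρ))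
    (x : S) (π : S → ℝ) (hπnn : ∀ y, 0 ≤ π y) (hπ1 : ∑' y, π y = 1)
    (hyag : ∀ y : S,
      Tendsto (fun n : ℕ => Kpow K n x y / ∑' z, Kpow K n x z) atTop (𝓝 (π y))) :
    Tendsto (fun n : ℕ => (∑' z, Kpow K (n + 1) x z) / (∑' z, Kpow K n x z))
      atTop (𝓝 ρ) :=
  yaglom_survival_ratio_general K hnn hsub hirr ρ hρpos hρ x π hπnn hπ1 hyag
end

section
/- With the same hypotheses as the previous statement, if additionally the support of K(x,·) is finite for every x ∈ S, then ĥ is ρ-harmonic: ∑_z K(x,z) ĥ(z) = ρ ĥ(x) for all x ∈ S. -/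
open Filter Topology

/-- Survival function: total mass of `Kpow K n x ·`. -/
noncomputable def Gsum {S : Type*} (K : S → S → ℝ) (n : ℕ) (x : S) : ℝ :=
  ∑' z, Kpow K n x z

/-- `(C * q^n)^(1/n) → q` for `C, q > 0`. -/
lemma pow_root_tendsto (C q : ℝ) (hC : 0 < C) (hq : 0 < q) :
    Tendsto (fun n : ℕ => (C * q ^ n) ^ ((n : ℝ)⁻¹)) atTop (𝓝 q) := by
  have h1 : Tendsto (fun n : ℕ => C ^ ((n : ℝ)⁻¹)) atTop (𝓝 1) := by
    have := (tendsto_const_nhds (x := C) (f := atTop (α := ℕ))).rpow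
      tendsto_inv_atTop_nhds_zero_nat (Or.inl hC.ne')
    rwa [Real.rpow_zero] at this
  have h2 := h1.mul (tendsto_const_nhds (x := q) (f := atTop (α := ℕ)))
  rw [one_mul] at h2
  apply h2.congr'
  filter_upwards [eventually_ge_atTop 1] with n hn
  have hn0 : (n : ℝ) ≠ 0 := Nat.cast_ne_zero.2 (by omega)
  rw [Real.mul_rpow hC.le (pow_nonneg hq.le n), ← Real.rpow_natCast q n,
    ← Real.rpow_mul hq.le, mul_inv_cancel₀ hn0, Real.rpow_one]

/-- Under the hypotheses of the previous statement, if moreover each row of `K`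
has finite support, then `ĥ` is `ρ`-harmonic. -/
theorem hhat_harmonic_of_finite_support {S : Type*} [Countable S] (K : S → S → ℝ)
    (hnn : ∀ x y, 0 ≤ K x y)
    (hsub : ∀ x, ∑' y, K x y ≤ 1)
    (hirr : ∀ x y : S, ∃ n, 0 < Kpow K n x y)
    (haper : ∀ x : S, ∀ m : ℕ, (∀ n, 0 < n → 0 < Kpow K n x x → m ∣ n) → m = 1)
    (ρ : ℝ) (hρpos : 0 < ρ) (hρle : ρ ≤ 1)
    (hρ : ∀ x y : S,
      Tendsto (fun n : ℕ => (Kpow K n x y) ^ ((n : ℝ)⁻¹)) atTop (𝓝 ρ))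
    (π : S → S → ℝ) (hπnn : ∀ x y, 0 ≤ π x y) (hπ1 : ∀ x, ∑' y, π x y = 1)
    (hyag : ∀ x y : S,
      Tendsto (fun n : ℕ => Kpow K n x y / ∑' z, Kpow K n x z) atTop (𝓝 (π x y)))
    (x₀ : S) (hhat : S → ℝ) (hhat₀ : hhat x₀ = 1)
    (hJR : ∀ y : S,
      Tendsto (fun n : ℕ => (∑' z, Kpow K n y z) / (∑' z, Kpow K n x₀ z))
        atTop (𝓝 (hhat y)))
    (hfin : ∀ x : S, {z : S | K x z ≠ 0}.Finite) :
    ∀ x : S, ∑' z, K x z * hhat z = ρ * hhat x := by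
  classical
  set F : S → Finset S := fun x => (hfin x).toFinset with hF
  have hK0 : ∀ x, ∀ z ∉ F x, K x z = 0 := by
    intro x z hz
    by_contra h'
    exact hz ((hfin x).mem_toFinset.2 h')
  have hKsum : ∀ x, Summable (K x) := fun x => summable_of_ne_finset_zero (hK0 x)
  have hKle1 : ∀ x z, K x z ≤ 1 :=
    fun x z => le_trans (Summable.le_tsum (hKsum x) z fun b _ => hnn x b) (hsub x)
  have kpnn : ∀ n, ∀ x y : S, 0 ≤ Kpow K n x y := by
    intro n
    induction n with
    | zero =>
      intro x y
      show (0:ℝ) ≤ if x = y then 1 else 0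
      split_ifs <;> norm_num
    | succ n ih =>
      intro x y
      exact tsum_nonneg fun z => mul_nonneg (ih x z) (hnn z y)
  -- joint induction: summability of rows of Kpow and left-multiplication recursion
  have main : ∀ n, (∀ x, Summable (Kpow K n x)) ∧
      (∀ x y, Kpow K (n+1) x y = ∑ w ∈ F x, K x w * Kpow K n w y) := by
    intro n
    induction n with
    | zero =>
      constructor
      · intro x
        apply summable_of_ne_finset_zero (s := {x})
        intro z hz
        simp only [Finset.mem_singleton] at hz
        show (if x = z then (1:ℝ) else 0) = 0
        rw [if_neg (fun h => hz h.symm)]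
      · intro x y
        have h1 : Kpow K 1 x y = K x y := by
          show (∑' z, Kpow K 0 x z * K z y) = K x y
          rw [tsum_eq_single x ?_]
          · show (if x = x then (1:ℝ) else 0) * K x y = K x y
            rw [if_pos rfl, one_mul]
          · intro b hb
            show (if x = b then (1:ℝ) else 0) * K b y = 0
            rw [if_neg (fun h => hb h.symm), zero_mul]
        rw [h1]
        have h2 : ∀ w ∈ F x, K x w * Kpow K 0 w y = if w = y then K x w else 0 := by
          intro w _
          show K x w * (if w = y then (1:ℝ) else 0) = _
          split_ifs <;> simp
        rw [Finset.sum_congr rfl h2, Finset.sum_ite_eq' (F x) y (fun w => K x w)]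
        split_ifs with hy
        · rfl
        · exact hK0 x y hy
    | succ n ih =>
      obtain ⟨hsumm, hrec⟩ := ih
      have hsumm' : ∀ x, Summable (Kpow K (n+1) x) := by
        intro x
        exact (summable_sum (s := F x)
          (fun w _ => (hsumm w).mul_left (K x w))).congr (fun y => (hrec x y).symm)
      refine ⟨hsumm', ?_⟩
      intro x y
      have hsml : ∀ w : S, Summable (fun z => Kpow K n w z * K z y) := by
        intro w
        apply Summable.of_nonneg_of_le (fun z => mul_nonneg (kpnn n w z) (hnn z y))
          (fun z => ?_) (hsumm w)
        calc Kpow K n w z * K z y ≤ Kpow K n w z * 1 :=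
              mul_le_mul_of_nonneg_left (hKle1 z y) (kpnn n w z)
          _ = Kpow K n w z := mul_one _
      calc Kpow K (n+2) x y = ∑' z, Kpow K (n+1) x z * K z y := rfl
        _ = ∑' z, ∑ w ∈ F x, K x w * (Kpow K n w z * K z y) := by
            apply tsum_congr
            intro z
            rw [hrec x z, Finset.sum_mul]
            exact Finset.sum_congr rfl fun w _ => mul_assoc _ _ _
        _ = ∑ w ∈ F x, ∑' z, K x w * (Kpow K n w z * K z y) :=
            Summable.tsum_finsetSum (fun w _ => (hsml w).mul_left (K x w))
        _ = ∑ w ∈ F x, K x w * ∑' z, Kpow K n w z * K z y :=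
            Finset.sum_congr rfl fun w _ => tsum_mul_left
        _ = ∑ w ∈ F x, K x w * Kpow K (n+1) w y := rfl
  have Gnn : ∀ n x, 0 ≤ Gsum K n x := fun n x => tsum_nonneg (kpnn n x)
  have Grec : ∀ n x, Gsum K (n+1) x = ∑ w ∈ F x, K x w * Gsum K n w := by
    intro n x
    calc Gsum K (n+1) x = ∑' y, ∑ w ∈ F x, K x w * Kpow K n w y :=
          tsum_congr fun y => (main n).2 x y
      _ = ∑ w ∈ F x, ∑' y, K x w * Kpow K n w y :=
          Summable.tsum_finsetSum (fun w _ => ((main n).1 w).mul_left (K x w))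
      _ = ∑ w ∈ F x, K x w * Gsum K n w :=
          Finset.sum_congr rfl fun w _ => tsum_mul_left
  -- positivity of Gsum K n x₀ for all n
  have hevpos : ∀ᶠ n in atTop, 0 < Kpow K n x₀ x₀ := by
    have h1 : ∀ᶠ n in atTop, ρ/2 < (Kpow K n x₀ x₀) ^ ((n : ℝ)⁻¹) :=
      (hρ x₀ x₀).eventually (eventually_gt_nhds (by linarith))
    filter_upwards [h1, eventually_ge_atTop 1] with n hn hn1
    rcases lt_or_eq_of_le (kpnn n x₀ x₀) with h | h
    · exact h
    · exfalso
      rw [← h, Real.zero_rpow (inv_ne_zero (Nat.cast_ne_zero.2 (by omega)))] at hn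
      linarith
  have hGposev : ∀ᶠ n in atTop, 0 < Gsum K n x₀ :=
    hevpos.mono fun n hn =>
      lt_of_lt_of_le hn (Summable.le_tsum ((main n).1 x₀) x₀ fun b _ => kpnn n x₀ b)
  have Gpos : ∀ n, 0 < Gsum K n x₀ := by
    by_contra h
    push_neg at h
    obtain ⟨n, hn⟩ := h
    have hz : ∀ z, Kpow K n x₀ z = 0 := fun z =>
      le_antisymm (le_trans (Summable.le_tsum ((main n).1 x₀) z fun b _ => kpnn n x₀ b) hn)
        (kpnn n x₀ z) |>.symm ▸ rfl
    have hall : ∀ m, ∀ z, Kpow K (n + m) x₀ z = 0 := by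
      intro m
      induction m with
      | zero => exact hz
      | succ m ih =>
        intro z
        show (∑' w, Kpow K (n + m) x₀ w * K w z) = 0
        rw [tsum_congr (fun w => by rw [ih w, zero_mul]), tsum_zero]
    rcases (hGposev.and (eventually_ge_atTop n)).exists with ⟨m, hm, hmn⟩
    have hGm : Gsum K m x₀ = 0 := by
      have h2 := hall (m - n)
      rw [Nat.add_sub_cancel' hmn] at h2
      show (∑' z, Kpow K m x₀ z) = 0
      rw [tsum_congr h2, tsum_zero]
    rw [hGm] at hm
    exact lt_irrefl 0 hm
  -- key convergence
  have key : ∀ x, Tendsto (fun n => ∑ w ∈ F x, K x w * (Gsum K n w / Gsum K n x₀))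
      atTop (𝓝 (∑ w ∈ F x, K x w * hhat w)) :=
    fun x => tendsto_finset_sum _ fun w _ => (hJR w).const_mul (K x w)
  have ratio_eq : ∀ x n, ∑ w ∈ F x, K x w * (Gsum K n w / Gsum K n x₀)
      = Gsum K (n+1) x / Gsum K n x₀ := by
    intro x n
    rw [Grec n x, Finset.sum_div]
    exact Finset.sum_congr rfl fun w _ => (mul_div_assoc _ _ _).symm
  set L : ℝ := ∑ w ∈ F x₀, K x₀ w * hhat w with hLdef
  have hr : Tendsto (fun n => Gsum K (n+1) x₀ / Gsum K n x₀) atTop (𝓝 L) :=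
    (key x₀).congr (ratio_eq x₀)
  -- (Gsum K n x₀)^(1/n) → ρ
  have hGroot : Tendsto (fun n : ℕ => (Gsum K n x₀) ^ ((n : ℝ)⁻¹)) atTop (𝓝 ρ) := by
    obtain ⟨y₁, hy⟩ : ∃ y, 0 < π x₀ y := by
      by_contra h
      push_neg at h
      have h0 : ∀ y, π x₀ y = 0 := fun y => le_antisymm (h y) (hπnn x₀ y)
      have := hπ1 x₀
      rw [tsum_congr h0, tsum_zero] at this
      norm_num at this
    have hp : Tendsto (fun n => Kpow K n x₀ y₁ / Gsum K n x₀) atTop (𝓝 (π x₀ y₁)) :=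
      hyag x₀ y₁
    have hppos : ∀ᶠ n in atTop, 0 < Kpow K n x₀ y₁ / Gsum K n x₀ :=
      hp.eventually (eventually_gt_nhds hy)
    have hp1 : Tendsto (fun n : ℕ => (Kpow K n x₀ y₁ / Gsum K n x₀) ^ ((n : ℝ)⁻¹))
        atTop (𝓝 1) := by
      have := hp.rpow tendsto_inv_atTop_nhds_zero_nat (Or.inl hy.ne')
      rwa [Real.rpow_zero] at this
    have hdiv := (hρ x₀ y₁).div hp1 one_ne_zero
    rw [div_one] at hdiv
    apply hdiv.congr'
    filter_upwards [hppos] with n hn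
    simp only [Pi.div_apply]
    have hkp : 0 < Kpow K n x₀ y₁ := by
      have := mul_pos hn (Gpos n)
      rwa [div_mul_cancel₀ _ (Gpos n).ne'] at this
    rw [Real.div_rpow (kpnn n x₀ y₁) (Gnn n x₀)]
    rw [div_div_eq_mul_div, mul_comm, mul_div_assoc, div_self
      (ne_of_gt (Real.rpow_pos_of_pos hkp _)), mul_one]
  -- comparison bounds
  have bound_above : ∀ q : ℝ, 0 < q →
      (∀ᶠ n in atTop, Gsum K (n+1) x₀ / Gsum K n x₀ ≤ q) → ρ ≤ q := by
    intro q hq hev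
    obtain ⟨N, hN⟩ := eventually_atTop.1 hev
    have hind : ∀ m, Gsum K (N + m) x₀ ≤ Gsum K N x₀ * q ^ m := by
      intro m
      induction m with
      | zero => simp
      | succ m ih =>
        have h1 : Gsum K (N + m + 1) x₀ ≤ q * Gsum K (N + m) x₀ := by
          have h2 := hN (N + m) (Nat.le_add_right N m)
          rw [div_le_iff₀ (Gpos (N + m))] at h2
          linarith
        calc Gsum K (N + (m + 1)) x₀ = Gsum K (N + m + 1) x₀ := rfl
          _ ≤ q * Gsum K (N + m) x₀ := h1
          _ ≤ q * (Gsum K N x₀ * q ^ m) := by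
              exact mul_le_mul_of_nonneg_left ih hq.le
          _ = Gsum K N x₀ * q ^ (m + 1) := by ring
    set C : ℝ := Gsum K N x₀ / q ^ N with hCdef
    have hC : 0 < C := div_pos (Gpos N) (pow_pos hq N)
    refine le_of_tendsto_of_tendsto hGroot (pow_root_tendsto C q hC hq) ?_
    filter_upwards [eventually_ge_atTop N] with n hn
    have h2 : Gsum K n x₀ ≤ C * q ^ n := by
      have h3 := hind (n - N)
      rw [Nat.add_sub_cancel' hn] at h3
      calc Gsum K n x₀ ≤ Gsum K N x₀ * q ^ (n - N) := h3
        _ = Gsum K N x₀ * (q ^ n / q ^ N) := by rw [pow_sub₀ q hq.ne' hn, div_eq_mul_inv]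
        _ = C * q ^ n := by rw [hCdef]; ring
    exact Real.rpow_le_rpow (Gnn n x₀) h2 (by positivity)
  have bound_below : ∀ q : ℝ, 0 < q →
      (∀ᶠ n in atTop, q ≤ Gsum K (n+1) x₀ / Gsum K n x₀) → q ≤ ρ := by
    intro q hq hev
    obtain ⟨N, hN⟩ := eventually_atTop.1 hev
    have hind : ∀ m, Gsum K N x₀ * q ^ m ≤ Gsum K (N + m) x₀ := by
      intro m
      induction m with
      | zero => simp
      | succ m ih =>
        have h1 : q * Gsum K (N + m) x₀ ≤ Gsum K (N + m + 1) x₀ := by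
          have h2 := hN (N + m) (Nat.le_add_right N m)
          rw [le_div_iff₀ (Gpos (N + m))] at h2
          linarith
        calc Gsum K N x₀ * q ^ (m + 1) = q * (Gsum K N x₀ * q ^ m) := by ring
          _ ≤ q * Gsum K (N + m) x₀ := mul_le_mul_of_nonneg_left ih hq.le
          _ ≤ Gsum K (N + (m + 1)) x₀ := h1
    set C : ℝ := Gsum K N x₀ / q ^ N with hCdef
    have hC : 0 < C := div_pos (Gpos N) (pow_pos hq N)
    refine le_of_tendsto_of_tendsto (pow_root_tendsto C q hC hq) hGroot ?_
    filter_upwards [eventually_ge_atTop N] with n hn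
    have h2 : C * q ^ n ≤ Gsum K n x₀ := by
      have h3 := hind (n - N)
      rw [Nat.add_sub_cancel' hn] at h3
      calc C * q ^ n = Gsum K N x₀ * (q ^ n / q ^ N) := by rw [hCdef]; ring
        _ = Gsum K N x₀ * q ^ (n - N) := by rw [pow_sub₀ q hq.ne' hn, div_eq_mul_inv]
        _ ≤ Gsum K n x₀ := h3
    exact Real.rpow_le_rpow (by positivity) h2 (by positivity)
  -- L = ρ
  have hL0 : 0 ≤ L := by
    refine le_of_tendsto_of_tendsto (tendsto_const_nhds (x := (0:ℝ))) hr ?_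
    filter_upwards with n
    exact div_nonneg (Gnn (n+1) x₀) (Gnn n x₀)
  have hLρ : L = ρ := by
    rcases lt_trichotomy L ρ with h | h | h
    · exfalso
      set q : ℝ := (L + ρ) / 2 with hqdef
      have hq : 0 < q := by rw [hqdef]; linarith
      have hev : ∀ᶠ n in atTop, Gsum K (n+1) x₀ / Gsum K n x₀ ≤ q := by
        apply (hr.eventually (eventually_lt_nhds (show L < q by rw [hqdef]; linarith))).mono
        intro n hn
        exact hn.le
      have := bound_above q hq hev
      rw [hqdef] at this
      linarith
    · exact h
    · exfalso
      set q : ℝ := (ρ + L) / 2 with hqdef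
      have hq : 0 < q := by rw [hqdef]; linarith
      have hev : ∀ᶠ n in atTop, q ≤ Gsum K (n+1) x₀ / Gsum K n x₀ := by
        apply (hr.eventually (eventually_gt_nhds (show q < L by rw [hqdef]; linarith))).mono
        intro n hn
        exact hn.le
      have := bound_below q hq hev
      rw [hqdef] at this
      linarith
  -- conclusion
  intro x
  have h1 : Tendsto (fun n => Gsum K (n+1) x / Gsum K n x₀) atTop
      (𝓝 (∑ w ∈ F x, K x w * hhat w)) := (key x).congr (ratio_eq x)
  have h2 : Tendsto (fun n => Gsum K (n+1) x / Gsum K n x₀) atTop (𝓝 (hhat x * L)) := by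
    have hx1 : Tendsto (fun n => Gsum K (n+1) x / Gsum K (n+1) x₀) atTop (𝓝 (hhat x)) :=
      (hJR x).comp (tendsto_add_atTop_nat 1)
    apply (hx1.mul hr).congr
    intro n
    have hne1 := (Gpos n).ne'
    have hne2 := (Gpos (n + 1)).ne'
    field_simp
  have hAx : ∑ w ∈ F x, K x w * hhat w = hhat x * L := tendsto_nhds_unique h1 h2
  have htsum : ∑' z, K x z * hhat z = ∑ w ∈ F x, K x w * hhat w :=
    tsum_eq_sum (fun z hz => by rw [hK0 x z hz, zero_mul])
  rw [htsum, hAx, hLρ]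
  ring
end

section
/- For the hub-and-two-spoke walk on ℤ (K(x,x−sgn(x)) = a, K(x,x+sgn(x)) = b for x ≠ 0, K(0,1) = K(0,−1) = b/2, with 0 < b < 1/2, a = 1−b) and ρ = 2√(ab), the family σ_ξ(y) = ((1−ρ)/(2a))(1+|y|+ξy)(√(b/a))^{|y|} for y ≠ 0 and σ_ξ(0) = (1−ρ)/a, indexed by ξ ∈ [−1,1], satisfies: each σ_ξ is a probability measure on ℤ, and σ_ξ K = ρ σ_ξ. -/
/-!
Put `s = √(b/a)`, so that `b = a s²`, `ρ = 2as` and `1 - ρ = a(1 - s)²` (as `a + b = 1`); then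
`σ_ξ = (1 - s)²/2 · w` with `w(y) = (1 + |y| + ξy) s^|y|` for `y ≠ 0` and `w(0) = 2`.
The walk is invariant under `y ↦ -y`, which turns `w` for `ξ` into `w` for `-ξ`, so `wK = ρw`
need only be checked at `y ≥ 0`. There it reads `b w(y-1) + a w(y+1) = 2as w(y)`, an identity
linear in `y` once `s^y` is factored out; at `y = 1` the halved exit rate `b/2` from the hub is
compensated by `w(0) = 2`. The mass of `w` comes from `∑ sⁿ` and `∑ n sⁿ`.
-/

namespace HubTwoSpoke

noncomputable section

def kernel (a b : ℝ) (x y : ℤ) : ℝ :=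
  if x = 0 then (if y = 1 ∨ y = -1 then b / 2 else 0)
  else if 0 < x then (if y = x + 1 then b else if y = x - 1 then a else 0)
  else (if y = x - 1 then b else if y = x + 1 then a else 0)

def profile (s ξ : ℝ) (y : ℤ) : ℝ :=
  if y = 0 then 2 else (1 + (y.natAbs : ℝ) + ξ * y) * s ^ y.natAbs

end

variable {a b s ξ : ℝ}

theorem kernel_neg_neg (x y : ℤ) : kernel a b (-x) (-y) = kernel a b x y := by
  unfold kernel
  split_ifs <;> first | rfl | omega

theorem kernel_eq_zero {x y : ℤ} (h₁ : x ≠ y - 1) (h₂ : x ≠ y + 1) : kernel a b x y = 0 := by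
  unfold kernel
  split_ifs <;> first | rfl | omega

theorem kernel_pred_self {y : ℤ} (hy : 1 < y) : kernel a b (y - 1) y = b := by
  unfold kernel
  split_ifs <;> first | rfl | omega

theorem kernel_succ_self {y : ℤ} (hy : 0 ≤ y) : kernel a b (y + 1) y = a := by
  unfold kernel
  split_ifs <;> first | rfl | omega

theorem tsum_mul_kernel (f : ℤ → ℝ) (y : ℤ) :
    ∑' x, f x * kernel a b x y =
      f (y - 1) * kernel a b (y - 1) y + f (y + 1) * kernel a b (y + 1) y := by
  rw [tsum_eq_sum (s := {y - 1, y + 1}), Finset.sum_pair (by omega)]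
  intro x hx
  simp only [Finset.mem_insert, Finset.mem_singleton, not_or] at hx
  rw [kernel_eq_zero hx.1 hx.2, mul_zero]

theorem profile_neg (y : ℤ) : profile s ξ (-y) = profile s (-ξ) y := by
  simp only [profile, neg_eq_zero, Int.natAbs_neg, Int.cast_neg, mul_neg, neg_mul]

theorem profile_natCast (n : ℕ) :
    profile s ξ n = (1 + (1 + ξ) * n) * s ^ n + if n = 0 then 1 else 0 := by
  rcases n.eq_zero_or_pos with rfl | hn
  · norm_num [profile]
  · rw [profile, if_neg (by omega), if_neg hn.ne', Int.natAbs_natCast, Int.cast_natCast]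
    ring

theorem profile_nonneg (hs : 0 ≤ s) (hξ : |ξ| ≤ 1) (y : ℤ) : 0 ≤ profile s ξ y := by
  unfold profile
  split_ifs
  · norm_num
  · have hξy : |ξ * y| ≤ (y.natAbs : ℝ) := by
      rw [abs_mul, Nat.cast_natAbs, Int.cast_abs]
      exact mul_le_of_le_one_left (abs_nonneg _) hξ
    have hlin : (0 : ℝ) ≤ 1 + (y.natAbs : ℝ) + ξ * y := by
      linarith [neg_abs_le (ξ * y)]
    positivity

theorem hasSum_profile_natCast (hs₀ : 0 ≤ s) (hs₁ : s < 1) :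
    HasSum (fun n : ℕ ↦ profile s ξ n) ((1 - s)⁻¹ + (1 + ξ) * (s / (1 - s) ^ 2) + 1) := by
  have h := ((hasSum_geometric_of_lt_one hs₀ hs₁).add
    ((hasSum_coe_mul_geometric_of_norm_lt_one (by rwa [Real.norm_of_nonneg hs₀])).mul_left
      (1 + ξ))).add (hasSum_ite_eq 0 1)
  convert h using 2 with n
  rw [profile_natCast]
  ring

theorem hasSum_profile (hs₀ : 0 ≤ s) (hs₁ : s < 1) :
    HasSum (profile s ξ) (2 / (1 - s) ^ 2) := by
  have h := (hasSum_profile_natCast (ξ := ξ) hs₀ hs₁).of_nat_of_neg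
    (by simpa only [profile_neg] using hasSum_profile_natCast (ξ := -ξ) hs₀ hs₁)
  have h₀ : profile s ξ 0 = 2 := if_pos rfl
  have hs : 1 - s ≠ 0 := by linarith
  rwa [h₀, show (1 - s)⁻¹ + (1 + ξ) * (s / (1 - s) ^ 2) + 1 +
      ((1 - s)⁻¹ + (1 + -ξ) * (s / (1 - s) ^ 2) + 1) - 2 = 2 / (1 - s) ^ 2 by
    field_simp; ring] at h

theorem tsum_profile_mul_kernel_of_nonneg {y : ℤ} (hy : 0 ≤ y) :
    ∑' x, profile s ξ x * kernel a (a * s ^ 2) x y = 2 * a * s * profile s ξ y := by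
  rw [tsum_mul_kernel]
  obtain rfl | rfl | hy : y = 0 ∨ y = 1 ∨ 1 < y := by omega
  · grind [profile, kernel]
  · grind [profile, kernel]
  · rw [kernel_pred_self hy, kernel_succ_self (by omega)]
    obtain ⟨n, rfl⟩ : ∃ n : ℕ, y = n + 2 := ⟨(y - 2).toNat, by omega⟩
    have h₀ : (n : ℤ) + 2 = ((n + 2 : ℕ) : ℤ) := by push_cast; ring
    have h₁ : (n : ℤ) + 2 - 1 = ((n + 1 : ℕ) : ℤ) := by push_cast; ring
    have h₂ : (n : ℤ) + 2 + 1 = ((n + 3 : ℕ) : ℤ) := by push_cast; ring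
    rw [h₁, h₂, h₀, profile_natCast, profile_natCast, profile_natCast]
    rw [if_neg (by omega), if_neg (by omega), if_neg (by omega)]
    push_cast
    ring

theorem tsum_profile_mul_kernel (y : ℤ) :
    ∑' x, profile s ξ x * kernel a (a * s ^ 2) x y = 2 * a * s * profile s ξ y := by
  rcases le_total 0 y with hy | hy
  · exact tsum_profile_mul_kernel_of_nonneg hy
  · rw [← (Equiv.neg ℤ).tsum_eq]
    simpa only [Equiv.neg_apply, profile_neg, neg_neg, ← kernel_neg_neg _ y] using
      tsum_profile_mul_kernel_of_nonneg (ξ := -ξ) (neg_nonneg.mpr hy)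

end HubTwoSpoke

open HubTwoSpoke in
/-- For the hub-and-two-spoke walk on `ℤ`, each `σ_ξ`, `ξ ∈ [-1,1]`, is a
`ρ`-invariant quasi-stationary distribution. -/
theorem hub_two_spoke_qsd_family
    (a b ρ : ℝ) (hb0 : 0 < b) (hb : b < 1 / 2) (ha : a = 1 - b)
    (hρ : ρ = 2 * Real.sqrt (a * b))
    (K : ℤ → ℤ → ℝ)
    (hK : ∀ x y : ℤ, K x y =
      if x = 0 then (if y = 1 ∨ y = -1 then b / 2 else 0)
      else if 0 < x then (if y = x + 1 then b else if y = x - 1 then a else 0)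
      else (if y = x - 1 then b else if y = x + 1 then a else 0))
    (σ : ℝ → ℤ → ℝ)
    (hσ : ∀ ξ : ℝ, ∀ y : ℤ, σ ξ y =
      if y = 0 then (1 - ρ) / a
      else (1 - ρ) / (2 * a) * (1 + (y.natAbs : ℝ) + ξ * (y : ℝ)) *
        Real.sqrt (b / a) ^ y.natAbs)
 :
    ∀ ξ ∈ Set.Icc (-1 : ℝ) 1,
      (∀ y : ℤ, 0 ≤ σ ξ y) ∧ (∑' y : ℤ, σ ξ y) = 1 ∧
        ∀ y : ℤ, ∑' z : ℤ, σ ξ z * K z y = ρ * σ ξ y := by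
  intro ξ hξ
  have ha₀ : 0 < a := by linarith
  set s := Real.sqrt (b / a)
  have hs₀ : 0 ≤ s := Real.sqrt_nonneg _
  have hb_eq : b = a * s ^ 2 := by rw [Real.sq_sqrt (by positivity)]; field_simp
  have hs₁ : s < 1 := by
    rw [Real.sqrt_lt' one_pos, one_pow, div_lt_one ha₀]; linarith
  have hρ_eq : ρ = 2 * a * s := by
    rw [hρ, hb_eq, show a * (a * s ^ 2) = (a * s) ^ 2 by ring, Real.sqrt_sq (by positivity)]; ring
  have hσ_eq : σ ξ = fun y ↦ (1 - s) ^ 2 / 2 * profile s ξ y := by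
    have h : 1 - ρ = a * (1 - s) ^ 2 := by rw [hρ_eq]; linear_combination hb_eq - ha
    funext y
    rw [hσ, profile, h]
    split_ifs <;> field_simp
  have hK_eq : K = kernel a (a * s ^ 2) := by
    funext x y; rw [hK, ← hb_eq]; rfl
  rw [hσ_eq, hK_eq]
  refine ⟨fun y ↦ mul_nonneg (by positivity) (profile_nonneg hs₀ (abs_le.2 hξ) y), ?_, fun y ↦ ?_⟩
  · rw [((hasSum_profile hs₀ hs₁).mul_left _).tsum_eq]
    field_simp [show 1 - s ≠ 0 by linarith]
  · simp_rw [mul_assoc, tsum_mul_left, tsum_profile_mul_kernel, hρ_eq]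
    ring
end

section
/- For the hub-and-two-spoke kernel K on ℤ with parameters 0 < b < 1/2, a = 1−b and ρ = 2√(ab), the functions h_ξ(y) = (1+|y|+ξy)(√(a/b))^{|y|}, ξ ∈ [−1,1], are nonnegative ρ-harmonic: ∑_z K(y,z) h_ξ(z) = ρ h_ξ(y) for all y ∈ ℤ. Moreover, every nonnegative ρ-harmonic function h with h(0) = 1 equals h_ξ for some ξ ∈ [−1,1]. -/
/-!
On either spoke the harmonic equation is the recurrence `b u(n+2) - ρ u(n+1) + a u(n) = 0`, whose
characteristic roots coincide at `r = √(a/b)` because `ρ = 2√(ab)`; so each spoke carries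
`(1 + c n) rⁿ` once `h(0) = 1`. Nonnegativity forces `c ≥ 0` on both spokes, and the equation at
the hub says that the two slopes add up to `2`: writing them as `1 ± ξ` gives `ξ ∈ [-1, 1]`.
-/

namespace LinearRecurrence

variable {R : Type*}

/-- `u (n + 2) = 2 r u (n + 1) - r² u n`, with characteristic polynomial `(X - r)²`. -/
def doubleRoot [CommRing R] (r : R) : LinearRecurrence R := ⟨2, ![-r ^ 2, 2 * r]⟩

theorem isSolution_doubleRoot_iff [CommRing R] {r : R} {u : ℕ → R} :
    (doubleRoot r).IsSolution u ↔ ∀ n, u (n + 2) = 2 * r * u (n + 1) - r ^ 2 * u n := by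
  refine forall_congr' fun n => ?_
  change u (n + 2) = ∑ i : Fin 2, ![-r ^ 2, 2 * r] i * u (n + i) ↔ _
  simp only [Fin.sum_univ_two, Matrix.cons_val_zero, Matrix.cons_val_one, Fin.val_zero,
    Fin.val_one, add_zero]
  constructor <;> intro h <;> rw [h] <;> ring

theorem isSolution_doubleRoot_linear_mul_pow [CommRing R] (r α β : R) :
    (doubleRoot r).IsSolution fun n => (α + β * n) * r ^ n :=
  isSolution_doubleRoot_iff.2 fun n => by push_cast; ring

theorem eq_linear_mul_pow_of_isSolution_doubleRoot [Field R] {r : R} (hr : r ≠ 0) {u : ℕ → R}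
    (hu : (doubleRoot r).IsSolution u) :
    u = fun n : ℕ => (u 0 + (u 1 / r - u 0) * n) * r ^ n := by
  refine (eq_iff_eqOn_range_order _ _ _ hu (isSolution_doubleRoot_linear_mul_pow r _ _)).2 ?_
  intro n hn
  obtain rfl | rfl : n = 0 ∨ n = 1 := by
    simp only [doubleRoot, Finset.coe_range, Set.mem_Iio, Order.lt_two_iff] at hn
    omega
  · simp
  · field_simp; ring

end LinearRecurrence

theorem Real.sqrt_mul_eq_mul_sqrt_div (a : ℝ) {b : ℝ} (hb : 0 < b) :
    √(a * b) = b * √(a / b) := by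
  rw [← Real.sqrt_sq hb.le, ← Real.sqrt_mul (sq_nonneg b), Real.sqrt_sq hb.le]
  congr 1
  field_simp

theorem nonneg_of_forall_linear_mul_pow_nonneg {c r : ℝ} (hr : 0 < r)
    (h : ∀ n : ℕ, 0 ≤ (1 + c * n) * r ^ n) : 0 ≤ c := by
  by_contra! hc
  obtain ⟨n, hn⟩ := exists_nat_gt (-1 / c)
  have := (mul_nonneg_iff_of_pos_right (pow_pos hr n)).1 (h n)
  rw [div_lt_iff_of_neg hc] at hn
  linarith

theorem Int.forall_iff_zero_and_natCast_succ_and_neg {P : ℤ → Prop} :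
    (∀ x, P x) ↔
      P 0 ∧ (∀ n : ℕ, P ((n + 1 : ℕ) : ℤ)) ∧ ∀ n : ℕ, P (-((n + 1 : ℕ) : ℤ)) := by
  refine ⟨fun h => ⟨h 0, fun n => h _, fun n => h _⟩, fun ⟨h0, hpos, hneg⟩ x => ?_⟩
  rcases x with (_ | n) | n
  exacts [h0, hpos n, hneg n]

noncomputable def hubKernel (a b : ℝ) (x y : ℤ) : ℝ :=
  if x = 0 then (if y = 1 ∨ y = -1 then b / 2 else 0)
  else if 0 < x then (if y = x + 1 then b else if y = x - 1 then a else 0)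
  else (if y = x - 1 then b else if y = x + 1 then a else 0)

section hubKernel

variable {a b : ℝ} (f : ℤ → ℝ)

theorem tsum_hubKernel_mul (x : ℤ) :
    ∑' y, hubKernel a b x y * f y =
      hubKernel a b x (x + 1) * f (x + 1) + hubKernel a b x (x - 1) * f (x - 1) := by
  have hsupp : ∀ y ∉ ({x + 1, x - 1} : Finset ℤ), hubKernel a b x y * f y = 0 := by
    intro y hy
    simp only [Finset.mem_insert, Finset.mem_singleton, not_or] at hy
    rw [hubKernel, mul_eq_zero]
    left
    split_ifs <;> first | rfl | omega
  rw [tsum_eq_sum hsupp, Finset.sum_pair (by omega)]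

theorem tsum_hubKernel_zero_mul : ∑' y, hubKernel a b 0 y * f y = b / 2 * (f 1 + f (-1)) := by
  rw [tsum_hubKernel_mul]
  simp only [hubKernel, ↓reduceIte, zero_add, Int.reduceNeg, reduceCtorEq, or_false, zero_sub,
    or_true]
  ring

theorem tsum_hubKernel_natCast_succ_mul (n : ℕ) :
    ∑' y, hubKernel a b ((n + 1 : ℕ) : ℤ) y * f y =
      b * f ((n + 2 : ℕ) : ℤ) + a * f n := by
  rw [tsum_hubKernel_mul]
  simp only [hubKernel]
  split_ifs <;> first | omega | (push_cast; ring_nf)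

theorem tsum_hubKernel_neg_natCast_succ_mul (n : ℕ) :
    ∑' y, hubKernel a b (-((n + 1 : ℕ) : ℤ)) y * f y =
      b * f (-((n + 2 : ℕ) : ℤ)) + a * f (-n) := by
  rw [tsum_hubKernel_mul]
  simp only [hubKernel]
  split_ifs <;> first | omega | (push_cast; ring_nf)

theorem hubKernel_harmonic_iff (hb : b ≠ 0) {r ρ : ℝ} (ha : a = b * r ^ 2)
    (hρ : ρ = 2 * b * r) :
    (∀ x, ∑' y, hubKernel a b x y * f y = ρ * f x) ↔
      f 1 + f (-1) = 4 * r * f 0 ∧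
      (LinearRecurrence.doubleRoot r).IsSolution (fun n : ℕ => f n) ∧
      (LinearRecurrence.doubleRoot r).IsSolution (fun n : ℕ => f (-n)) := by
  have spoke (u₀ u₁ u₂ : ℝ) :
      b * u₂ + a * u₀ = ρ * u₁ ↔ u₂ = 2 * r * u₁ - r ^ 2 * u₀ := by
    subst ha hρ
    exact ⟨fun h => mul_left_cancel₀ hb (by linear_combination h),
      fun h => by linear_combination b * h⟩
  have hub : b / 2 * (f 1 + f (-1)) = ρ * f 0 ↔ f 1 + f (-1) = 4 * r * f 0 := by
    subst hρ
    exact ⟨fun h => mul_left_cancel₀ hb (by linear_combination 2 * h),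
      fun h => by linear_combination b / 2 * h⟩
  simp only [Int.forall_iff_zero_and_natCast_succ_and_neg, tsum_hubKernel_zero_mul,
    tsum_hubKernel_natCast_succ_mul, tsum_hubKernel_neg_natCast_succ_mul, hub, spoke,
    LinearRecurrence.isSolution_doubleRoot_iff]

end hubKernel

noncomputable def hubFamily (r ξ : ℝ) (y : ℤ) : ℝ :=
  (1 + (y.natAbs : ℝ) + ξ * (y : ℝ)) * r ^ y.natAbs

section hubFamily

variable {r : ℝ}

theorem hubFamily_natCast (ξ : ℝ) (n : ℕ) : hubFamily r ξ n = (1 + (1 + ξ) * n) * r ^ n := by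
  rw [hubFamily, Int.natAbs_natCast]; push_cast; ring

theorem hubFamily_neg_natCast (ξ : ℝ) (n : ℕ) :
    hubFamily r ξ (-n) = (1 + (1 - ξ) * n) * r ^ n := by
  rw [hubFamily, Int.natAbs_neg, Int.natAbs_natCast]; push_cast; ring

theorem hubFamily_nonneg (hr : 0 ≤ r) {ξ : ℝ} (hξ : ξ ∈ Set.Icc (-1) 1) (y : ℤ) :
    0 ≤ hubFamily r ξ y := by
  have : |ξ * y| ≤ y.natAbs := by
    rw [abs_mul, Nat.cast_natAbs, Int.cast_abs]
    exact mul_le_of_le_one_left (abs_nonneg _) (abs_le.2 hξ)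
  exact mul_nonneg (by linarith [neg_abs_le (ξ * y)]) (pow_nonneg hr _)

variable {a b ρ : ℝ}

theorem hubKernel_harmonic_hubFamily (hb : b ≠ 0) (ha : a = b * r ^ 2) (hρ : ρ = 2 * b * r)
    (ξ : ℝ) (x : ℤ) :
    ∑' y, hubKernel a b x y * hubFamily r ξ y = ρ * hubFamily r ξ x := by
  refine (hubKernel_harmonic_iff _ hb ha hρ).2 ⟨?_, ?_, ?_⟩ x
  · simp only [hubFamily]
    norm_num
    ring
  · simpa only [hubFamily_natCast] using
      LinearRecurrence.isSolution_doubleRoot_linear_mul_pow r 1 (1 + ξ)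
  · simpa only [hubFamily_neg_natCast] using
      LinearRecurrence.isSolution_doubleRoot_linear_mul_pow r 1 (1 - ξ)

theorem eq_hubFamily_of_harmonic (hb : b ≠ 0) (ha : a = b * r ^ 2) (hρ : ρ = 2 * b * r)
    (hr : 0 < r) {g : ℤ → ℝ} (hg : ∀ x, 0 ≤ g x)
    (hgρ : ∀ x, ∑' y, hubKernel a b x y * g y = ρ * g x) (hg0 : g 0 = 1) :
    ∃ ξ ∈ Set.Icc (-1 : ℝ) 1, g = hubFamily r ξ := by
  obtain ⟨hhub, hgpos, hgneg⟩ := (hubKernel_harmonic_iff g hb ha hρ).1 hgρ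
  set B := g 1 / r - 1
  set D := g (-1) / r - 1
  have hgB (n : ℕ) : g n = (1 + B * n) * r ^ n := by
    simpa [hg0] using
      congrFun (LinearRecurrence.eq_linear_mul_pow_of_isSolution_doubleRoot hr.ne' hgpos) n
  have hgD (n : ℕ) : g (-n) = (1 + D * n) * r ^ n := by
    simpa [hg0] using
      congrFun (LinearRecurrence.eq_linear_mul_pow_of_isSolution_doubleRoot hr.ne' hgneg) n
  have hBD : B + D = 2 := by
    rw [hg0] at hhub
    simp only [B, D]
    field_simp
    linear_combination hhub
  have hB : 0 ≤ B := nonneg_of_forall_linear_mul_pow_nonneg hr fun n => hgB n ▸ hg n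
  have hD : 0 ≤ D := nonneg_of_forall_linear_mul_pow_nonneg hr fun n => hgD n ▸ hg (-n)
  refine ⟨B - 1, ⟨by linarith, by linarith⟩, funext fun y => ?_⟩
  obtain ⟨n, rfl | rfl⟩ := Int.eq_nat_or_neg y
  · rw [hgB, hubFamily_natCast]
    ring
  · rw [hgD, hubFamily_neg_natCast, show 1 - (B - 1) = D by linarith]

end hubFamily

/-- For the hub-and-two-spoke kernel, the functions
`h_ξ(y) = (1 + |y| + ξy)(√(a/b))^{|y|}`, `ξ ∈ [-1,1]`, are nonnegative and
`ρ`-harmonic, and every nonnegative `ρ`-harmonic function normalized by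
`h(0) = 1` is of this form. -/
theorem hub_two_spoke_harmonic_family
    (a b ρ : ℝ) (hb0 : 0 < b) (hb : b < 1 / 2) (ha : a = 1 - b)
    (hρ : ρ = 2 * Real.sqrt (a * b))
    (K : ℤ → ℤ → ℝ)
    (hK : ∀ x y : ℤ, K x y =
      if x = 0 then (if y = 1 ∨ y = -1 then b / 2 else 0)
      else if 0 < x then (if y = x + 1 then b else if y = x - 1 then a else 0)
      else (if y = x - 1 then b else if y = x + 1 then a else 0))
    (h : ℝ → ℤ → ℝ)
    (hh : ∀ ξ : ℝ, ∀ y : ℤ, h ξ y =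
      (1 + (y.natAbs : ℝ) + ξ * (y : ℝ)) * Real.sqrt (a / b) ^ y.natAbs) :
    (∀ ξ ∈ Set.Icc (-1 : ℝ) 1,
      (∀ y : ℤ, 0 ≤ h ξ y) ∧ ∀ y : ℤ, ∑' z : ℤ, K y z * h ξ z = ρ * h ξ y) ∧
    ∀ g : ℤ → ℝ, (∀ y, 0 ≤ g y) → (∀ y : ℤ, ∑' z : ℤ, K y z * g z = ρ * g y) →
      g 0 = 1 → ∃ ξ ∈ Set.Icc (-1 : ℝ) 1, g = h ξ := by
  obtain rfl : K = hubKernel a b := funext fun x => funext (hK x)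
  obtain rfl : h = hubFamily √(a / b) := funext fun ξ => funext (hh ξ)
  have hab : 0 < a / b := div_pos (by linarith) hb0
  have hr : 0 < √(a / b) := Real.sqrt_pos.2 hab
  have ha' : a = b * √(a / b) ^ 2 := by rw [Real.sq_sqrt hab.le]; field_simp
  have hρ' : ρ = 2 * b * √(a / b) := by rw [hρ, Real.sqrt_mul_eq_mul_sqrt_div a hb0]; ring
  exact ⟨fun ξ hξ =>
      ⟨hubFamily_nonneg hr.le hξ, hubKernel_harmonic_hubFamily hb0.ne' ha' hρ' ξ⟩,
    fun g hg hgρ hg0 => eq_hubFamily_of_harmonic hb0.ne' ha' hρ' hr hg hgρ hg0⟩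
end

section
/- For the hub-and-two-spoke model, every ρ-invariant probability measure σ for K can be written as σ = ((1+ξ)/2) σ_1 + ((1−ξ)/2) σ_{−1} for some ξ ∈ [−1,1], where σ_{±1} are the extreme members of the family σ_ξ; equivalently σ_ξ(y) = ((1+ξ)/2)σ_1(y) + ((1−ξ)/2)σ_{−1}(y) for all y ∈ ℤ. -/
/-!
With `r = √(b/a)` we have `b = a r²` and `ρ = 2 a r`, so on each spoke an invariant `τ`
satisfies `τ(n+1) - 2 r τ(n) + r² τ(n-1) = 0`, whose characteristic root `r` is double:
`τ(±n) = (c + d± n) rⁿ`. The equations at `±1` force `c = τ(0)/2` on both spokes, the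
equation at the hub forces `d₊ + d₋ = 2c`, positivity forces `d± ≥ 0`, and the total mass
`2c/(1-r)²` forces `2c = (1-r)²`. Then `ξ = d₊/c - 1 ∈ [-1, 1]`.
-/

lemma eq_of_double_root_recurrence {f : ℕ → ℝ} {c d r : ℝ} (h0 : f 0 = c)
    (h1 : f 1 = (c + d) * r) (hrec : ∀ n, f (n + 2) = 2 * r * f (n + 1) - r ^ 2 * f n) :
    ∀ n : ℕ, f n = (c + d * n) * r ^ n := by
  intro n
  induction n using Nat.twoStepInduction with
  | zero => simp [h0]
  | one => simp [h1]
  | more n ih₀ ih₁ => rw [hrec, ih₀, ih₁]; push_cast; ring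

lemma nonneg_of_forall_nonneg_add_mul {c d : ℝ} (h : ∀ n : ℕ, 0 ≤ c + d * n) : 0 ≤ d := by
  by_contra! hd
  obtain ⟨n, hn⟩ := exists_nat_gt (c / -d)
  have := h n
  rw [div_lt_iff₀ (neg_pos.mpr hd)] at hn
  linarith

lemma hasSum_add_mul_geometric {c d r : ℝ} (hr0 : 0 ≤ r) (hr1 : r < 1) :
    HasSum (fun n : ℕ => (c + d * n) * r ^ n) (c / (1 - r) + d * r / (1 - r) ^ 2) := by
  have hgeo := (hasSum_geometric_of_lt_one hr0 hr1).mul_left c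
  have hn := (hasSum_coe_mul_geometric_of_norm_lt_one
    (by rwa [Real.norm_of_nonneg hr0])).mul_left d
  rw [show c / (1 - r) + d * r / (1 - r) ^ 2 = c * (1 - r)⁻¹ + d * (r / (1 - r) ^ 2) by ring]
  exact (hgeo.add hn).congr_fun fun n => by ring

/-- Splitting the hub mass evenly between the two spokes turns the equation at `±1` into the
recurrence that holds further out. -/
noncomputable def spoke (τ : ℤ → ℝ) (n : ℕ) : ℝ := if n = 0 then τ 0 / 2 else τ n

lemma spoke_nonneg {τ : ℤ → ℝ} (hτ : ∀ y, 0 ≤ τ y) (n : ℕ) : 0 ≤ spoke τ n := by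
  unfold spoke
  split_ifs
  · exact div_nonneg (hτ 0) zero_le_two
  · exact hτ n

lemma hasSum_of_hasSum_spoke {τ : ℤ → ℝ} {s t : ℝ} (hpos : HasSum (spoke τ) s)
    (hneg : HasSum (spoke fun y => τ (-y)) t) : HasSum τ (s + t) := by
  rw [← hasSum_nat_add_iff' 1] at hpos hneg
  simp only [spoke, Nat.add_eq_zero_iff, one_ne_zero, and_false, if_false,
    Finset.range_one, Finset.sum_singleton, if_true, Nat.cast_add, Nat.cast_one,
    neg_zero] at hpos hneg
  have h := hpos.of_add_one_of_neg_add_one hneg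
  rwa [show s - τ 0 / 2 + τ 0 + (t - τ 0 / 2) = s + t by ring] at h

namespace hubKernel

variable {a b : ℝ}

lemma apply_neg_neg (x y : ℤ) : hubKernel a b (-x) (-y) = hubKernel a b x y := by
  unfold hubKernel
  split_ifs <;> first | rfl | omega

lemma apply_self_add_one {x : ℤ} (hx : 0 < x) : hubKernel a b x (x + 1) = b := by
  unfold hubKernel
  split_ifs <;> first | rfl | omega

lemma apply_add_one_self {x : ℤ} (hx : 0 ≤ x) : hubKernel a b (x + 1) x = a := by
  unfold hubKernel
  split_ifs <;> first | rfl | omega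

lemma eq_zero_of_not_adjacent {x y : ℤ} (h₁ : x ≠ y - 1) (h₂ : x ≠ y + 1) :
    hubKernel a b x y = 0 := by
  unfold hubKernel
  split_ifs <;> first | rfl | omega

lemma tsum_mul (τ : ℤ → ℝ) (y : ℤ) :
    ∑' z, τ z * hubKernel a b z y =
      τ (y - 1) * hubKernel a b (y - 1) y + τ (y + 1) * hubKernel a b (y + 1) y := by
  rw [tsum_eq_sum (s := {y - 1, y + 1}), Finset.sum_pair (by omega)]
  intro z hz
  simp only [Finset.mem_insert, Finset.mem_singleton, not_or] at hz
  rw [eq_zero_of_not_adjacent hz.1 hz.2, mul_zero]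

variable {ρ : ℝ} {τ : ℤ → ℝ}

lemma invariant_comp_neg (hτ : ∀ y, ∑' z, τ z * hubKernel a b z y = ρ * τ y) (y : ℤ) :
    ∑' z, τ (-z) * hubKernel a b z y = ρ * τ (-y) := by
  rw [← hτ, ← (Equiv.neg ℤ).tsum_eq]
  simp only [Equiv.neg_apply, neg_neg]
  congr 1; ext z
  rw [← apply_neg_neg, neg_neg]

lemma hub_balance (hτ : ∀ y, ∑' z, τ z * hubKernel a b z y = ρ * τ y) :
    a * (τ 1 + τ (-1)) = ρ * τ 0 := by
  have h1 : hubKernel a b 1 0 = a := apply_add_one_self le_rfl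
  have h2 : hubKernel a b (-1) 0 = a := by rw [← neg_zero, apply_neg_neg, h1]
  have h := hτ 0
  rw [tsum_mul, zero_sub, zero_add, h1, h2] at h
  linarith

lemma spoke_recurrence (hτ : ∀ y, ∑' z, τ z * hubKernel a b z y = ρ * τ y) (n : ℕ) :
    b * spoke τ n + a * spoke τ (n + 2) = ρ * spoke τ (n + 1) := by
  have h := hτ (n + 1)
  rw [tsum_mul, add_sub_cancel_right, apply_add_one_self (by omega), add_assoc,
    one_add_one_eq_two] at h
  simp only [spoke, Nat.add_eq_zero_iff, one_ne_zero, OfNat.ofNat_ne_zero, and_false, if_false]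
  push_cast
  rcases Nat.eq_zero_or_pos n with rfl | hn
  · have h01 : hubKernel a b 0 1 = b / 2 := by simp [hubKernel]
    rw [Nat.cast_zero, zero_add, h01] at h
    rw [if_pos rfl, Nat.cast_zero, zero_add]
    linarith
  · rw [apply_self_add_one (by omega)] at h
    rw [if_neg hn.ne']
    linarith

lemma spoke_eq_of_invariant {r : ℝ} (ha : a ≠ 0) (hr : r ≠ 0) (hb : b = a * r ^ 2)
    (hρ : ρ = 2 * a * r) (hτ : ∀ y, ∑' z, τ z * hubKernel a b z y = ρ * τ y) :
    ∃ d : ℝ, ∀ n : ℕ, spoke τ n = (τ 0 / 2 + d * n) * r ^ n := by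
  refine ⟨spoke τ 1 / r - τ 0 / 2, eq_of_double_root_recurrence (by simp [spoke])
    (by field_simp; ring) fun n => ?_⟩
  have h := spoke_recurrence hτ n
  rw [hb, hρ] at h
  apply mul_left_cancel₀ ha
  linear_combination h

end hubKernel

/-- `σ_ξ` rewritten with `r = √(b/a)`, using `(1 - ρ) / a = (1 - r)²`. -/
noncomputable def hubProfile (r ξ : ℝ) (y : ℤ) : ℝ :=
  if y = 0 then (1 - r) ^ 2
  else (1 - r) ^ 2 / 2 * (1 + (y.natAbs : ℝ) + ξ * y) * r ^ y.natAbs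

lemma hubProfile_eq_convex_comb (r ξ : ℝ) (y : ℤ) :
    hubProfile r ξ y = (1 + ξ) / 2 * hubProfile r 1 y + (1 - ξ) / 2 * hubProfile r (-1) y := by
  unfold hubProfile
  split_ifs <;> ring

lemma eq_hubProfile_of_spoke_eq {τ : ℤ → ℝ} {r c d : ℝ} (hc : 2 * c = (1 - r) ^ 2) (hc0 : c ≠ 0)
    (hpos : ∀ n : ℕ, spoke τ n = (c + d * n) * r ^ n)
    (hneg : ∀ n : ℕ, spoke (fun y => τ (-y)) n = (c + (2 * c - d) * n) * r ^ n) (y : ℤ) :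
    τ y = hubProfile r (d / c - 1) y := by
  have h0 : τ 0 = 2 * c := by
    have h := hpos 0
    simp only [spoke, if_true, Nat.cast_zero, mul_zero, add_zero, pow_zero, mul_one] at h
    linarith
  obtain ⟨n, rfl | rfl⟩ := Int.eq_nat_or_neg y <;> rcases Nat.eq_zero_or_pos n with rfl | hn
  · simpa [hubProfile, ← hc] using h0
  · have h := hpos n
    simp only [spoke, hn.ne', if_false] at h
    simp only [hubProfile, Int.natAbs_natCast, h, Int.natCast_eq_zero, hn.ne', if_false, ← hc]
    push_cast
    field_simp
    ring
  · simpa [hubProfile, ← hc] using h0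
  · have h := hneg n
    simp only [spoke, hn.ne', if_false] at h
    simp only [hubProfile, Int.natAbs_neg, Int.natAbs_natCast, h, neg_eq_zero,
      Int.natCast_eq_zero, hn.ne', if_false, ← hc]
    push_cast
    field_simp
    ring

lemma exists_eq_hubProfile_of_invariant {a b ρ r : ℝ} {τ : ℤ → ℝ} (ha : a ≠ 0) (hr0 : 0 < r)
    (hr1 : r < 1) (hb : b = a * r ^ 2) (hρ : ρ = 2 * a * r) (hτ0 : ∀ y, 0 ≤ τ y)
    (hτ1 : ∑' y, τ y = 1) (hτ : ∀ y, ∑' z, τ z * hubKernel a b z y = ρ * τ y) :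
    ∃ ξ ∈ Set.Icc (-1 : ℝ) 1, ∀ y, τ y = hubProfile r ξ y := by
  obtain ⟨d, hpos⟩ := hubKernel.spoke_eq_of_invariant ha hr0.ne' hb hρ hτ
  obtain ⟨d', hneg⟩ :=
    hubKernel.spoke_eq_of_invariant ha hr0.ne' hb hρ (hubKernel.invariant_comp_neg hτ)
  simp only [neg_zero] at hneg
  generalize hc : τ 0 / 2 = c at hpos hneg
  obtain rfl : d' = 2 * c - d := by
    have h := hubKernel.hub_balance hτ
    have h1 := hpos 1
    have h1' := hneg 1
    simp only [spoke, one_ne_zero, if_false, Nat.cast_one, mul_one, pow_one] at h1 h1'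
    rw [h1, h1', hρ, show τ 0 = 2 * c by linarith] at h
    have h' : a * r * (d + d' - 2 * c) = 0 := by linear_combination h
    have := (mul_eq_zero.mp h').resolve_left (mul_ne_zero ha hr0.ne')
    linarith
  have hd_nonneg {e : ℝ} (he : ∀ n : ℕ, 0 ≤ (c + e * n) * r ^ n) : 0 ≤ e :=
    nonneg_of_forall_nonneg_add_mul fun n => nonneg_of_mul_nonneg_left (he n) (pow_pos hr0 n)
  have hd0 := hd_nonneg fun n => hpos n ▸ spoke_nonneg hτ0 n
  have hd0' := hd_nonneg fun n => hneg n ▸ spoke_nonneg (fun y => hτ0 (-y)) n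
  have hsum : HasSum τ _ := hasSum_of_hasSum_spoke
    (by rw [funext hpos]; exact hasSum_add_mul_geometric hr0.le hr1)
    (by rw [funext hneg]; exact hasSum_add_mul_geometric hr0.le hr1)
  have hmass : 2 * c = (1 - r) ^ 2 := by
    have h := hsum.tsum_eq
    rw [hτ1] at h
    field_simp [(sub_pos.mpr hr1).ne'] at h
    linear_combination -h
  have hc0 : 0 < c := by nlinarith
  refine ⟨d / c - 1, ⟨?_, ?_⟩, eq_hubProfile_of_spoke_eq hmass hc0.ne' hpos hneg⟩
  · have := div_nonneg hd0 hc0.le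
    linarith
  · have := (div_le_iff₀ hc0).mpr (by linarith : d ≤ 2 * c)
    linarith

lemma sqrt_div_facts {a b : ℝ} (hb0 : 0 < b) (hb : b < 1 / 2) (ha : a = 1 - b) :
    0 < √(b / a) ∧ √(b / a) < 1 ∧ b = a * √(b / a) ^ 2 ∧ √(a * b) = a * √(b / a) := by
  have ha0 : 0 < a := by linarith
  have hr2 : √(b / a) ^ 2 = b / a := Real.sq_sqrt (by positivity)
  refine ⟨Real.sqrt_pos.mpr (by positivity), ?_, by rw [hr2]; field_simp, ?_⟩
  · rw [Real.sqrt_lt' one_pos, one_pow, div_lt_one ha0]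
    linarith
  · rw [show a * b = a ^ 2 * (b / a) by field_simp, Real.sqrt_mul (sq_nonneg a),
      Real.sqrt_sq ha0.le]

/-- Every `ρ`-invariant probability measure of the hub-and-two-spoke model is a
convex combination `((1+ξ)/2)σ₁ + ((1-ξ)/2)σ₋₁` of the two extreme members. -/
theorem hub_two_spoke_qsd_representation
    (a b ρ : ℝ) (hb0 : 0 < b) (hb : b < 1 / 2) (ha : a = 1 - b)
    (hρ : ρ = 2 * Real.sqrt (a * b))
    (K : ℤ → ℤ → ℝ)
    (hK : ∀ x y : ℤ, K x y =
      if x = 0 then (if y = 1 ∨ y = -1 then b / 2 else 0)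
      else if 0 < x then (if y = x + 1 then b else if y = x - 1 then a else 0)
      else (if y = x - 1 then b else if y = x + 1 then a else 0))
    (σ : ℝ → ℤ → ℝ)
    (hσ : ∀ ξ : ℝ, ∀ y : ℤ, σ ξ y =
      if y = 0 then (1 - ρ) / a
      else (1 - ρ) / (2 * a) * (1 + (y.natAbs : ℝ) + ξ * (y : ℝ)) *
        Real.sqrt (b / a) ^ y.natAbs)
 :
    (∀ ξ ∈ Set.Icc (-1 : ℝ) 1, ∀ y : ℤ,
      σ ξ y = (1 + ξ) / 2 * σ 1 y + (1 - ξ) / 2 * σ (-1) y) ∧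
    ∀ τ : ℤ → ℝ, (∀ y, 0 ≤ τ y) → (∑' y : ℤ, τ y) = 1 →
      (∀ y : ℤ, ∑' z : ℤ, τ z * K z y = ρ * τ y) →
      ∃ ξ ∈ Set.Icc (-1 : ℝ) 1, ∀ y : ℤ,
        τ y = (1 + ξ) / 2 * σ 1 y + (1 - ξ) / 2 * σ (-1) y := by
  obtain rfl : K = hubKernel a b := funext₂ hK
  obtain ⟨hr0, hr1, hbr, hab⟩ := sqrt_div_facts hb0 hb ha
  set r := √(b / a)
  have ha0 : a ≠ 0 := by linarith
  have hρr : ρ = 2 * a * r := by rw [hρ, hab]; ring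
  have hσr (ξ : ℝ) : σ ξ = hubProfile r ξ := by
    have h1ρ : 1 - ρ = a * (1 - r) ^ 2 := by linear_combination -hρr - ha + hbr
    ext y
    rw [hσ, hubProfile, h1ρ]
    field_simp
  simp only [hσr]
  refine ⟨fun ξ _ => hubProfile_eq_convex_comb r ξ, fun τ hτ0 hτ1 hτ => ?_⟩
  obtain ⟨ξ, hξ, hτξ⟩ := exists_eq_hubProfile_of_invariant ha0 hr0 hr1 hbr hρr hτ0 hτ1 hτ
  exact ⟨ξ, hξ, fun y => (hτξ y).trans (hubProfile_eq_convex_comb r ξ y)⟩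
end

section
/- For the remaining-lifetime kernel K on ℕ₀ defined by K(0,n) = f_n for n ≥ 1 and K(n,n−1) = 1 for n ≥ 1, where (f_n) are the first-return probabilities to 0 of the hub-and-one-spoke gambler's ruin walk (with generating function F(z) = (1−√(1−4abz²))/2 satisfying F(R) = 1/2 for R = 1/(2√(ab))), there exists no nonzero nonnegative function h : ℕ₀ → ℝ≥0 with Kh = ρh for ρ = 2√(ab). The function ĥ(x) = R^x satisfies Kĥ ≤ ρĥ (strict inequality at x = 0), i.e., ĥ is ρ-superharmonic but not ρ-harmonic. -/
/-!
Only the first step of `K` is not deterministic: from `x ≥ 1` it moves to `x - 1`. So a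
`ρ`-harmonic `h` satisfies `h (x - 1) = ρ h x` for `x ≥ 1`, i.e. `h x = R ^ x h 0`. At `0` the
harmonic equation then reads `ρ F(R) h 0 = ρ h 0`, and `F(R) = 1/2` forces `h 0 = 0`. The
same computation with `h x = R ^ x` gives equality at every `x ≥ 1` and `ρ / 2 < ρ` at `0`.
-/

theorem tsum_succ_mul_pow_eq_inv_mul {𝕜 : Type*} [Field 𝕜] [TopologicalSpace 𝕜]
    [IsTopologicalRing 𝕜] [T2Space 𝕜] {f : ℕ → 𝕜} (hf0 : f 0 = 0) {R : 𝕜} (hR : R ≠ 0) :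
    ∑' n, f (n + 1) * R ^ n = R⁻¹ * ∑' n, f n * R ^ n := by
  have hsupp : Function.support (fun n => f n * R ^ n) ⊆ Set.range Nat.succ := by
    rintro (_ | n) hn
    · simp [hf0] at hn
    · exact ⟨n, rfl⟩
  rw [← Nat.succ_injective.tsum_eq hsupp, ← tsum_mul_left]
  congr 1 with n
  rw [Nat.succ_eq_add_one, pow_succ]
  field_simp

def lifetimeKernel (f : ℕ → ℝ) (x y : ℕ) : ℝ :=
  if x = 0 then f (y + 1) else if y = x - 1 then 1 else 0

namespace lifetimeKernel

variable (f : ℕ → ℝ) (h : ℕ → ℝ)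

theorem tsum_zero_mul : ∑' y, lifetimeKernel f 0 y * h y = ∑' y, f (y + 1) * h y := by
  simp [lifetimeKernel]

theorem tsum_succ_mul (x : ℕ) : ∑' y, lifetimeKernel f (x + 1) y * h y = h x := by
  rw [tsum_eq_single x fun y hy => by simp [lifetimeKernel, hy]]
  simp [lifetimeKernel]

variable {f h}

theorem eq_inv_pow_mul_of_harmonic {ρ : ℝ} (hρ : ρ ≠ 0)
    (hh : ∀ x, ∑' y, lifetimeKernel f x y * h y = ρ * h x) (n : ℕ) :
    h n = ρ⁻¹ ^ n * h 0 := by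
  induction n with
  | zero => simp
  | succ n ih =>
    have hstep : h n = ρ * h (n + 1) := (tsum_succ_mul f h n).symm.trans (hh (n + 1))
    rw [pow_succ, mul_right_comm, ← ih, hstep]
    field_simp

theorem harmonic_eq_zero {ρ : ℝ} (hρ : ρ ≠ 0) (hF : ∑' y, f (y + 1) * ρ⁻¹ ^ y ≠ ρ)
    (hh : ∀ x, ∑' y, lifetimeKernel f x y * h y = ρ * h x) (n : ℕ) : h n = 0 := by
  have hpow := eq_inv_pow_mul_of_harmonic hρ hh
  have h0 : (∑' y, f (y + 1) * ρ⁻¹ ^ y) * h 0 = ρ * h 0 := by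
    rw [← hh 0, tsum_zero_mul, ← tsum_mul_right]
    congr 1 with y
    rw [hpow y, mul_assoc]
  have : h 0 = 0 := by
    by_contra hne
    exact hF (mul_right_cancel₀ hne h0)
  rw [hpow n, this, mul_zero]

end lifetimeKernel

theorem remaining_lifetime_no_harmonic_general
    (a b ρ R : ℝ) (hb0 : 0 < b) (hb : b < 1 / 2) (ha : a = 1 - b)
    (hρ : ρ = 2 * Real.sqrt (a * b)) (hR : R = ρ⁻¹)
    (f : ℕ → ℝ) (hf0 : f 0 = 0)
    (hFR : ∑' n : ℕ, f n * R ^ n = 1 / 2)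
    (K : ℕ → ℕ → ℝ)
    (hK : ∀ x y : ℕ, K x y =
      if x = 0 then f (y + 1) else if y = x - 1 then 1 else 0) :
    (∀ h : ℕ → ℝ, (∀ n, 0 ≤ h n) → (∀ x : ℕ, ∑' y, K x y * h y = ρ * h x) →
        ∀ n, h n = 0) ∧
    (∀ x : ℕ, ∑' y, K x y * R ^ y ≤ ρ * R ^ x) ∧
    (∑' y, K 0 y * R ^ y) < ρ * R ^ (0 : ℕ) := by
  obtain rfl : K = lifetimeKernel f := funext₂ hK
  have hρ0 : 0 < ρ := by
    rw [hρ]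
    have : 0 < a * b := mul_pos (by linarith) hb0
    positivity
  subst hR
  have hF : ∑' y, f (y + 1) * ρ⁻¹ ^ y = ρ / 2 := by
    rw [tsum_succ_mul_pow_eq_inv_mul hf0 (inv_ne_zero hρ0.ne'), hFR, inv_inv, mul_one_div]
  have hrow0 : ∑' y, lifetimeKernel f 0 y * ρ⁻¹ ^ y < ρ * ρ⁻¹ ^ (0 : ℕ) := by
    rw [lifetimeKernel.tsum_zero_mul, hF, pow_zero, mul_one]
    linarith
  refine ⟨fun h _ hh => lifetimeKernel.harmonic_eq_zero hρ0.ne' (by linarith) hh, ?_, hrow0⟩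
  rintro (_ | x)
  · exact hrow0.le
  · rw [lifetimeKernel.tsum_succ_mul, pow_succ, mul_left_comm, mul_inv_cancel₀ hρ0.ne', mul_one]

/-- For the remaining-lifetime kernel `K` on `ℕ` (row 0 given by the
first-return probabilities `f` of the gambler's ruin walk, `K(n, n-1) = 1` for
`n ≥ 1`), there is no nonzero nonnegative `ρ`-harmonic function, and
`ĥ(x) = R^x` is `ρ`-superharmonic with strict inequality at `0`. -/
theorem remaining_lifetime_no_harmonic
    (a b ρ R : ℝ) (hb0 : 0 < b) (hb : b < 1 / 2) (ha : a = 1 - b)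
    (hρ : ρ = 2 * Real.sqrt (a * b)) (hR : R = ρ⁻¹)
    (f : ℕ → ℝ) (hf0 : f 0 = 0) (hfnn : ∀ n, 0 ≤ f n)
    (hfodd : ∀ n, Odd n → f n = 0)
    (hFR : ∑' n : ℕ, f n * R ^ n = 1 / 2)
    (hF1 : ∑' n : ℕ, f n = b)
    (K : ℕ → ℕ → ℝ)
    (hK : ∀ x y : ℕ, K x y =
      if x = 0 then f (y + 1) else if y = x - 1 then 1 else 0) :
    (∀ h : ℕ → ℝ, (∀ n, 0 ≤ h n) → (∀ x : ℕ, ∑' y, K x y * h y = ρ * h x) →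
        ∀ n, h n = 0) ∧
    (∀ x : ℕ, ∑' y, K x y * R ^ y ≤ ρ * R ^ x) ∧
    (∑' y, K 0 y * R ^ y) < ρ * R ^ (0 : ℕ) :=
  remaining_lifetime_no_harmonic_general a b ρ R hb0 hb ha hρ hR f hf0 hFR K hK
end
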